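/- Let A be a real N×N matrix that is positive definite in the sense that xᵀAx > 0 for every nonzero x ∈ ℝ^N, and let b ∈ ℝ^N be nonzero. Then there exists α ∈ ℝ such that ‖b − α·Ab‖₂ < ‖b‖₂; consequently the minimum of ‖b − Az‖₂ over z ∈ K_1(A, b) = span{b} is strictly smaller than ‖b‖₂. -/

import Mathlib

/-! Positive definiteness gives `⟪b, A b⟫ > 0`, and subtracting from `b` its orthogonal projection
onto a vector it is not orthogonal to strictly shortens it. The Krylov statement takes `z = α b`. -/

open Matrix

/-- The Euclidean norm ‖v‖₂ on ℝ^N. -/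
noncomputable def eNorm {N : ℕ} (v : Fin N → ℝ) : ℝ :=
  Real.sqrt (∑ i, (v i) ^ 2)

open RealInnerProductSpace

theorem norm_sub_smul_lt_norm_of_inner_pos {E : Type*} [NormedAddCommGroup E]
    [InnerProductSpace ℝ E] {b c : E} (h : 0 < ⟪b, c⟫) :
    ‖b - (⟪b, c⟫ / ‖c‖ ^ 2) • c‖ < ‖b‖ := by
  have hc : ‖c‖ ≠ 0 := norm_ne_zero_iff.mpr fun hc => by simp [hc] at h
  have hsq : ‖b - (⟪b, c⟫ / ‖c‖ ^ 2) • c‖ ^ 2 = ‖b‖ ^ 2 - ⟪b, c⟫ ^ 2 / ‖c‖ ^ 2 := by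
    rw [norm_sub_sq_real, real_inner_smul_right, norm_smul, mul_pow, Real.norm_eq_abs, sq_abs]
    field_simp
    ring
  have : 0 < ⟪b, c⟫ ^ 2 / ‖c‖ ^ 2 := by positivity
  exact pow_lt_pow_iff_left₀ (norm_nonneg _) (norm_nonneg _) two_ne_zero |>.mp (by linarith)

theorem eNorm_eq_norm_toLp {N : ℕ} (v : Fin N → ℝ) :
    eNorm v = ‖WithLp.toLp 2 v‖ := by
  simp [eNorm, EuclideanSpace.norm_eq]

/-- If A is a real N×N matrix with xᵀAx > 0 for every nonzero x, and
b ≠ 0, then there exists α ∈ ℝ with ‖b − α·Ab‖₂ < ‖b‖₂; consequently the minimum of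
‖b − Az‖₂ over z ∈ K_1(A, b) = span{b} is strictly smaller than ‖b‖₂. -/
theorem one_step_residual_decrease_of_posdef
    {N : ℕ} (A : Matrix (Fin N) (Fin N) ℝ)
    (hA : ∀ x : Fin N → ℝ, x ≠ 0 → 0 < x ⬝ᵥ (A *ᵥ x))
    (b : Fin N → ℝ) (hb : b ≠ 0) :
    (∃ α : ℝ, eNorm (b - α • (A *ᵥ b)) < eNorm b) ∧
    ∃ z ∈ Submodule.span ℝ {b}, eNorm (b - A *ᵥ z) < eNorm b := by
  set c := A *ᵥ b
  have hbc : 0 < ⟪WithLp.toLp 2 b, WithLp.toLp 2 c⟫ := by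
    rw [EuclideanSpace.inner_toLp_toLp, star_trivial, dotProduct_comm]
    exact hA b hb
  set α := ⟪WithLp.toLp 2 b, WithLp.toLp 2 c⟫ / ‖WithLp.toLp 2 c‖ ^ 2
  have hα : eNorm (b - α • c) < eNorm b := by
    simpa only [eNorm_eq_norm_toLp, WithLp.toLp_sub, WithLp.toLp_smul]
      using norm_sub_smul_lt_norm_of_inner_pos hbc
  refine ⟨⟨α, hα⟩, α • b, Submodule.smul_mem _ α (Submodule.mem_span_singleton_self b), ?_⟩
  rwa [mulVec_smul]
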